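/- With notation as in the α_a construction, the intersection of all finite supports of α_a equals the set {x ∈ {a} | ¬ (∀ n, α(n) = false)}, i.e., a belongs to every finite support of α_a if and only if ¬(∀ n, α(n) = false), and no element other than a belongs to every finite support. -/

import Mathlib

/-- The subgroup of finitary permutations of `𝔸`: permutations moving
only finitely many elements. -/
def FinPerm (𝔸 : Type*) : Subgroup (Equiv.Perm 𝔸) where
  carrier := {π : Equiv.Perm 𝔸 | {a | π a ≠ a}.Finite}
  one_mem' := by simp
  mul_mem' := by
    intro π σ hπ hσ
    refine (hπ.union hσ).subset ?_
    intro a ha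
    by_contra h
    simp only [Set.mem_union, Set.mem_setOf_eq, not_or, not_not] at h
    exact ha (by simp [Equiv.Perm.mul_apply, h.1, h.2])
  inv_mem' := by
    intro π hπ
    refine hπ.subset ?_
    intro a ha
    simp only [Set.mem_setOf_eq] at *
    intro h
    exact ha (by nth_rewrite 1 [← h]; first | exact π.symm_apply_apply a | simp [h])

/-- `A` supports `x`: every finitary permutation fixing `A` pointwise fixes `x`. -/
def NSupports (𝔸 : Type*) {X : Type*} [MulAction (FinPerm 𝔸) X] (A : Set 𝔸) (x : X) : Prop :=
  ∀ π : FinPerm 𝔸, (∀ a ∈ A, π.1 a = a) → π • x = x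

/-- `A` supports `f : ℕ → 𝔸 ⊕ Unit` under the conjugation action (which here is
postcomposition with the action on `𝔸 ⊕ Unit`, since `ℕ` carries the trivial action). -/
def FunSupports {𝔸 : Type*} (A : Set 𝔸) (f : ℕ → 𝔸 ⊕ Unit) : Prop :=
  ∀ π : FinPerm 𝔸, (∀ b ∈ A, π.1 b = b) → (fun n => Sum.map π.1 id (f n)) = f

/-! The finite supports of `f : ℕ → 𝔸 ⊕ Unit` are exactly the finite sets containing every atom
occurring in `f`: an atom outside a finite set `A` can be swapped with a fresh one by a permutation
fixing `A` pointwise, which changes `f`. For `α_a` the only atom that can occur is `a`, and it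
occurs iff `α` is not identically `false`. -/

theorem Equiv.swap_mem_finPerm {𝔸 : Type*} [DecidableEq 𝔸] (a b : 𝔸) :
    Equiv.swap a b ∈ FinPerm 𝔸 :=
  (Set.toFinite {a, b}).subset fun _ hx => Equiv.eq_or_eq_of_swap_apply_ne_self hx

section FunSupports

variable {𝔸 : Type*} {f : ℕ → 𝔸 ⊕ Unit}

def inlValues (f : ℕ → 𝔸 ⊕ Unit) : Set 𝔸 := {b | ∃ n, f n = Sum.inl b}

theorem funSupports_of_inlValues_subset {A : Set 𝔸} (h : inlValues f ⊆ A) :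
    FunSupports A f := by
  intro π hπ
  funext n
  rcases hfn : f n with b | u
  · simp [hπ b (h ⟨n, hfn⟩)]
  · rfl

theorem inlValues_subset_of_funSupports [Infinite 𝔸] {A : Set 𝔸} (hA : A.Finite)
    (hf : FunSupports A f) : inlValues f ⊆ A := by
  classical
  rintro b ⟨n, hfn⟩
  by_contra hbA
  obtain ⟨c, hc⟩ := (hA.insert b).infinite_compl.nonempty
  simp only [Set.mem_compl_iff, Set.mem_insert_iff, not_or] at hc
  have hfix : ∀ x ∈ A, Equiv.swap b c x = x := fun x hx =>
    Equiv.swap_apply_of_ne_of_ne (ne_of_mem_of_not_mem hx hbA) (ne_of_mem_of_not_mem hx hc.2)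
  have := congrFun (hf ⟨_, Equiv.swap_mem_finPerm b c⟩ hfix) n
  simp only [hfn, Sum.map_inl, Equiv.swap_apply_left, Sum.inl.injEq] at this
  exact hc.1 this

theorem sInter_finite_funSupports [Infinite 𝔸] (hfin : (inlValues f).Finite) :
    ⋂₀ {A : Set 𝔸 | A.Finite ∧ FunSupports A f} = inlValues f := by
  refine (Set.sInter_subset_of_mem ?_).antisymm fun _ hb _ hA => ?_
  · exact ⟨hfin, funSupports_of_inlValues_subset le_rfl⟩
  · exact inlValues_subset_of_funSupports hA.1 hA.2 hb

end FunSupports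

theorem stmt_9_general {𝔸 : Type*} [Infinite 𝔸]
    (a : 𝔸) (α : ℕ → Bool)
    (αa : ℕ → 𝔸 ⊕ Unit)
    (hαa : ∀ n, αa n = if α n then Sum.inl a else Sum.inr ()) :
    ⋂₀ {A : Set 𝔸 | A.Finite ∧ FunSupports A αa} =
      {x : 𝔸 | x = a ∧ ¬ ∀ n, α n = false} := by
  have hvalues : inlValues αa = {x : 𝔸 | x = a ∧ ¬ ∀ n, α n = false} := by
    ext x
    simp only [inlValues, hαa, Set.mem_ofPred_eq, not_forall, Bool.not_eq_false]
    constructor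
    · rintro ⟨n, hn⟩
      cases h : α n
      · simp [h] at hn
      · simp only [h, if_true, Sum.inl.injEq] at hn
        exact ⟨hn.symm, n, h⟩
    · rintro ⟨rfl, n, hn⟩
      exact ⟨n, by simp [hn]⟩
  rw [sInter_finite_funSupports, hvalues]
  exact (Set.finite_singleton a).subset (by rw [hvalues]; exact fun x hx => hx.1)

theorem stmt_9 {𝔸 : Type*} [Infinite 𝔸] [DecidableEq 𝔸]
    (a : 𝔸) (α : ℕ → Bool)
    (αa : ℕ → 𝔸 ⊕ Unit)
    (hαa : ∀ n, αa n = if α n then Sum.inl a else Sum.inr ()) :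
    ⋂₀ {A : Set 𝔸 | A.Finite ∧ FunSupports A αa} =
      {x : 𝔸 | x = a ∧ ¬ ∀ n, α n = false} :=
  stmt_9_general a α αa hαa
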